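/- In the multicolored k-cycle lower bound graph with color classes A_1 (color 1), A_2 (color 2), B_1 (color 3), B_2 (color 4), paths of k-3 edges between a_{1,i} and b_{1,i} using each of the remaining colors 5,...,k exactly once, edges {a_{2,i}, b_{2,i}}, and encoding edges {a_{1,j},a_{2,ℓ}} iff x_0(j,ℓ)=1 and {b_{1,j},b_{2,ℓ}} iff x_1(j,ℓ)=1: there exists a cycle of length k using exactly one vertex of each of the k colors if and only if there exist (j,ℓ) with x_0(j,ℓ) = x_1(j,ℓ) = 1. -/

import Mathlib

/-- Vertices of the multicolored `k`-cycle lower bound graph, for `k = m + 4`: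
`inl (s, i)` is the `i`-th vertex of the color class `A₁, A₂, B₁, B₂`
(for `s = 0, 1, 2, 3`), and `inr (i, t)` for `t < m = k - 4` are the internal
vertices of the path of `k - 3` edges joining `a_{1,i}` to `b_{1,i}`. -/
abbrev MCVertex (N m : ℕ) := (Fin 4 × Fin N) ⊕ (Fin N × Fin m)

/-- Base relation of the multicolored `k`-cycle lower bound graph (`k = m + 4`):
paths of `k - 3` edges `a_{1,i} - q_{i,0} - ⋯ - q_{i,m-1} - b_{1,i}` (a direct edge
`a_{1,i} - b_{1,i}` when `m = 0`), edges `{a_{2,i}, b_{2,i}}`, and encoding edges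
`{a_{1,j}, a_{2,ℓ}}` iff `x₀ j ℓ` and `{b_{1,j}, b_{2,ℓ}}` iff `x₁ j ℓ`. -/
def mcRel {N : ℕ} (m : ℕ) (x0 x1 : Fin N → Fin N → Prop) :
    MCVertex N m → MCVertex N m → Prop := fun a b =>
  match a, b with
  | .inl (s, i), .inl (t, j) =>
      (s = 1 ∧ t = 3 ∧ i = j) ∨ (s = 0 ∧ t = 1 ∧ x0 i j) ∨
        (s = 2 ∧ t = 3 ∧ x1 i j) ∨ (m = 0 ∧ s = 0 ∧ t = 2 ∧ i = j)
  | .inl (s, i), .inr (j, t) =>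
      i = j ∧ ((s = 0 ∧ (t : ℕ) = 0) ∨ (s = 2 ∧ (t : ℕ) = m - 1))
  | .inr (i, t), .inr (j, u) => i = j ∧ (u : ℕ) = (t : ℕ) + 1
  | .inr _, .inl _ => False

/-- The `k`-coloring of the lower bound graph (`k = m + 4`): `A₁, A₂, B₁, B₂` get
colors `0, 1, 2, 3`, and the `t`-th internal path vertex gets color `4 + t`. -/
def mcColor {N m : ℕ} : MCVertex N m → Fin (m + 4) := fun a =>
  match a with
  | .inl (s, _) => ⟨s.val, by have := s.isLt; omega⟩
  | .inr (_, t) => ⟨4 + t.val, by have := t.isLt; omega⟩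

/-!
On a cycle every vertex has two distinct cycle neighbours, so if each graph neighbour of a cycle
vertex `u` satisfies `P` or `Q`, and at most one cycle vertex satisfies `Q`, then some cycle vertex
satisfies `P`. On a multicolored cycle this applies with `Q` a color class. Starting from the
cycle's vertex `a_{2,l}` of `A₂`, it puts `b_{2,l}` and some `a_{1,j}` with `x₀ j l` on the cycle;
from `b_{2,l}` it puts some `b_{1,j'}` with `x₁ j' l` on the cycle. The internal path vertices have
degree two, so walking back along the path from `b_{1,j'}` puts `a_{1,j'}` on the cycle, and
`j = j'` since the cycle meets `A₁` only once. Conversely, `a_{1,j}`, the path to `b_{1,j}`,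
`b_{2,l}`, `a_{2,l}` is a multicolored cycle.
-/

theorem ZMod.sub_one_ne_add_one {n : ℕ} (hn : 3 ≤ n) (p : ZMod n) : p - 1 ≠ p + 1 := by
  intro h
  have h2 : ((2 : ℕ) : ZMod n) = 0 := by
    push_cast
    linear_combination -h
  have := Nat.le_of_dvd two_pos ((ZMod.natCast_eq_zero_iff 2 n).mp h2)
  omega

theorem ZMod.val_add_one {n : ℕ} (p : ZMod (n + 1)) :
    (p + 1).val = if p.val = n then 0 else p.val + 1 := by
  have hp := ZMod.val_lt p
  rw [ZMod.val_add, ZMod.val_one_eq_one_mod, Nat.add_mod_mod]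
  split_ifs with h
  · rw [h, Nat.mod_self]
  · exact Nat.mod_eq_of_lt (by omega)

theorem SimpleGraph.exists_mem_range_of_adj_imp_or {V : Type*} {G : SimpleGraph V} {n : ℕ}
    (hn : 3 ≤ n) {f : ZMod n → V} (hf : Function.Injective f)
    (hadj : ∀ p, G.Adj (f p) (f (p + 1))) {u : V} (hu : u ∈ Set.range f) {P Q : V → Prop}
    (hPQ : ∀ w, G.Adj u w → P w ∨ Q w) (hQ : {w ∈ Set.range f | Q w}.Subsingleton) :
    ∃ w ∈ Set.range f, P w := by
  obtain ⟨p, rfl⟩ := hu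
  have hprev : G.Adj (f p) (f (p - 1)) := by simpa using (hadj (p - 1)).symm
  rcases hPQ _ hprev with h | hprevQ
  · exact ⟨_, ⟨_, rfl⟩, h⟩
  rcases hPQ _ (hadj p) with h | hnextQ
  · exact ⟨_, ⟨_, rfl⟩, h⟩
  exact absurd (hf (hQ ⟨⟨_, rfl⟩, hprevQ⟩ ⟨⟨_, rfl⟩, hnextQ⟩)) (ZMod.sub_one_ne_add_one hn p)

variable {N m : ℕ} {x0 x1 : Fin N → Fin N → Prop}

abbrev mcGraph (m : ℕ) (x0 x1 : Fin N → Fin N → Prop) : SimpleGraph (MCVertex N m) :=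
  SimpleGraph.fromRel (mcRel m x0 x1)

/-- `mcPath i s` for `s ≤ m + 1` is the `s`-th vertex of the path from `a_{1,i}` to `b_{1,i}`. -/
def mcPath (i : Fin N) : ℕ → MCVertex N m
  | 0 => .inl (0, i)
  | s + 1 => if h : s < m then .inr (i, ⟨s, h⟩) else .inl (2, i)

@[simp]
theorem mcPath_zero (i : Fin N) : (mcPath i 0 : MCVertex N m) = .inl (0, i) := rfl

theorem mcPath_succ_of_lt (i : Fin N) {t : ℕ} (ht : t < m) :
    (mcPath i (t + 1) : MCVertex N m) = .inr (i, ⟨t, ht⟩) :=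
  dif_pos ht

@[simp]
theorem mcPath_succ_self (i : Fin N) : (mcPath i (m + 1) : MCVertex N m) = .inl (2, i) :=
  dif_neg (lt_irrefl m)

theorem mcGraph_adj_mcPath_succ (i : Fin N) {s : ℕ} (hs : s ≤ m) :
    (mcGraph m x0 x1).Adj (mcPath i s) (mcPath i (s + 1)) := by
  rcases s with _ | s <;> rcases m with _ | m <;> grind [mcPath, mcRel, SimpleGraph.fromRel_adj]

theorem eq_mcPath_of_mcGraph_adj_mcPath {i : Fin N} {t : ℕ} (ht : t < m) {w : MCVertex N m}
    (h : (mcGraph m x0 x1).Adj (mcPath i (t + 1)) w) :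
    w = mcPath i t ∨ w = mcPath i (t + 2) := by
  rcases w with ⟨s, j⟩ | ⟨j, u⟩ <;> rcases t with _ | t <;>
    grind [mcPath, mcRel, SimpleGraph.fromRel_adj]

theorem eq_mcPath_of_mcGraph_adj_mcPath_last {i : Fin N} {w : MCVertex N m}
    (h : (mcGraph m x0 x1).Adj (mcPath i (m + 1)) w) :
    w = mcPath i m ∨ ∃ l, w = .inl (3, l) := by
  rw [mcPath_succ_self] at h
  rcases m with _ | m <;> rcases w with ⟨s, j⟩ | ⟨j, u⟩ <;>
    grind [mcPath, mcRel, SimpleGraph.fromRel_adj]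

theorem eq_of_mcGraph_adj_inl_one {l : Fin N} {w : MCVertex N m}
    (h : (mcGraph m x0 x1).Adj (.inl (1, l)) w) :
    (∃ j, w = .inl (0, j) ∧ x0 j l) ∨ w = .inl (3, l) := by
  cases w <;> grind [mcRel, SimpleGraph.fromRel_adj]

theorem eq_of_mcGraph_adj_inl_three {l : Fin N} {w : MCVertex N m}
    (h : (mcGraph m x0 x1).Adj (.inl (3, l)) w) :
    (∃ j, w = .inl (2, j) ∧ x1 j l) ∨ w = .inl (1, l) := by
  cases w <;> grind [mcRel, SimpleGraph.fromRel_adj]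

theorem exists_eq_inl_one_of_mcColor_eq_one {w : MCVertex N m} (h : mcColor w = 1) :
    ∃ l, w = .inl (1, l) := by
  have h := congrArg Fin.val h
  rcases w with ⟨s, j⟩ | ⟨j, u⟩ <;> simp only [mcColor, Fin.val_one] at h
  · exact ⟨j, by rw [show s = 1 from Fin.ext h]⟩
  · omega

section ColorfulCycle

variable {f : ZMod (m + 4) → MCVertex N m} (hf : Function.Injective f)
  (hadj : ∀ p, (mcGraph m x0 x1).Adj (f p) (f (p + 1)))
  (hcol : Set.InjOn mcColor (Set.range f))
include hf hadj hcol

theorem mcPath_zero_mem_range (i : Fin N) {s : ℕ} (hs : s ≤ m + 1)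
    (h : mcPath i s ∈ Set.range f) : mcPath i 0 ∈ Set.range f := by
  induction s with
  | zero => exact h
  | succ s ih =>
    refine ih (by omega) ?_
    obtain ⟨_, h, rfl⟩ : ∃ w ∈ Set.range f, w = mcPath i s := by
      rcases (Nat.lt_succ_iff.mp hs).lt_or_eq with hs | rfl
      · exact SimpleGraph.exists_mem_range_of_adj_imp_or (by omega) hf hadj h
          (fun _ => eq_mcPath_of_mcGraph_adj_mcPath hs) fun _ h _ h' => h.2.trans h'.2.symm
      · refine SimpleGraph.exists_mem_range_of_adj_imp_or (by omega) hf hadj h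
          (fun _ => eq_mcPath_of_mcGraph_adj_mcPath_last) ?_
        rintro _ ⟨hw, l, rfl⟩ _ ⟨hw', l', rfl⟩
        exact hcol hw hw' rfl
    exact h

theorem exists_x0_x1_of_colorful_cycle (hsurj : Function.Surjective (mcColor ∘ f)) :
    ∃ j l, x0 j l ∧ x1 j l := by
  have hn : 3 ≤ m + 4 := by omega
  obtain ⟨p, hp⟩ := hsurj 1
  obtain ⟨l, hpl⟩ := exists_eq_inl_one_of_mcColor_eq_one hp
  have ha₂ : .inl (1, l) ∈ Set.range f := ⟨p, hpl⟩
  obtain ⟨_, ha₁, j, rfl, hx0⟩ := SimpleGraph.exists_mem_range_of_adj_imp_or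
    (Q := (· = .inl (3, l))) hn hf hadj ha₂
    (fun _ => eq_of_mcGraph_adj_inl_one) fun _ h _ h' => h.2.trans h'.2.symm
  obtain ⟨_, hb₂, rfl⟩ := SimpleGraph.exists_mem_range_of_adj_imp_or
    (P := (· = .inl (3, l))) (Q := (mcColor · = 0)) hn hf hadj ha₂
    (fun _ hw => (eq_of_mcGraph_adj_inl_one hw).symm.imp_right fun ⟨_, h, _⟩ => h ▸ rfl)
    fun _ h _ h' => hcol h.1 h'.1 (h.2.trans h'.2.symm)
  obtain ⟨_, hb₁, j', rfl, hx1⟩ := SimpleGraph.exists_mem_range_of_adj_imp_or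
    (Q := (· = .inl (1, l))) hn hf hadj hb₂
    (fun _ => eq_of_mcGraph_adj_inl_three) fun _ h _ h' => h.2.trans h'.2.symm
  have ha₁' := mcPath_zero_mem_range hf hadj hcol j' le_rfl (by simpa using hb₁)
  have hj : j = j' := by simpa using hcol ha₁ ha₁' rfl
  exact ⟨j, l, hx0, hj ▸ hx1⟩

end ColorfulCycle

/-- The cycle `a_{1,j}`, path to `b_{1,j}`, `b_{2,l}`, `a_{2,l}`, at positions `0, …, m + 3`. -/
def mcCycle (j l : Fin N) (p : ZMod (m + 4)) : MCVertex N m :=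
  if p.val ≤ m + 1 then mcPath j p.val else if p.val = m + 2 then .inl (3, l) else .inl (1, l)

theorem mcGraph_adj_mcCycle {j l : Fin N} (hx0 : x0 j l) (hx1 : x1 j l) (p : ZMod (m + 4)) :
    (mcGraph m x0 x1).Adj (mcCycle j l p) (mcCycle j l (p + 1)) := by
  have hp := ZMod.val_lt p
  unfold mcCycle
  rw [ZMod.val_add_one p]
  obtain hk | hk | hk | hk : p.val ≤ m ∨ p.val = m + 1 ∨ p.val = m + 2 ∨ p.val = m + 3 := by
    omega
  · rw [if_neg (show p.val ≠ m + 3 by omega), if_pos (show p.val ≤ m + 1 by omega),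
      if_pos (show p.val + 1 ≤ m + 1 by omega)]
    exact mcGraph_adj_mcPath_succ j hk
  · simp [hk, mcRel, SimpleGraph.fromRel_adj, hx1]
  · simp [hk, mcRel, SimpleGraph.fromRel_adj]
  · simp [hk, mcRel, SimpleGraph.fromRel_adj, hx0]

theorem mcColor_comp_mcCycle_bijective (j l : Fin N) :
    Function.Bijective (mcColor ∘ mcCycle (m := m) j l) := by
  refine (Fintype.bijective_iff_surjective_and_card _).2 ⟨?_, by simp⟩
  have hval (k : ℕ) (hk : k < m + 4) : (k : ZMod (m + 4)).val = k := ZMod.val_natCast_of_lt hk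
  rintro ⟨c, hc⟩
  obtain rfl | rfl | rfl | rfl | hc4 : c = 0 ∨ c = 1 ∨ c = 2 ∨ c = 3 ∨ 4 ≤ c := by omega
  · exact ⟨(0 : ℕ), by rw [Function.comp_apply, mcCycle, hval 0 (by omega)]; rfl⟩
  · refine ⟨(m + 3 : ℕ), ?_⟩
    rw [Function.comp_apply, mcCycle, hval _ (by omega), if_neg (by omega), if_neg (by omega)]
    rfl
  · refine ⟨(m + 1 : ℕ), ?_⟩
    rw [Function.comp_apply, mcCycle, hval _ (by omega), if_pos le_rfl, mcPath_succ_self]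
    rfl
  · refine ⟨(m + 2 : ℕ), ?_⟩
    rw [Function.comp_apply, mcCycle, hval _ (by omega), if_neg (by omega), if_pos rfl]
    rfl
  · refine ⟨(c - 4 + 1 : ℕ), ?_⟩
    rw [Function.comp_apply, mcCycle, hval _ (by omega), if_pos (by omega),
      mcPath_succ_of_lt j (by omega)]
    ext
    simp only [mcColor]
    omega

theorem multicolored_cycle_iff_general (N m : ℕ)
    (x0 x1 : Fin N → Fin N → Prop) :
    (∃ f : ZMod (m + 4) → MCVertex N m,
      Function.Injective f ∧
      (∀ p : ZMod (m + 4), (SimpleGraph.fromRel (mcRel m x0 x1)).Adj (f p) (f (p + 1))) ∧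
      Function.Bijective (mcColor ∘ f)) ↔
    ∃ j l : Fin N, x0 j l ∧ x1 j l := by
  constructor
  · rintro ⟨f, hf, hadj, hcol⟩
    exact exists_x0_x1_of_colorful_cycle hf hadj hcol.1.injOn_range hcol.2
  · rintro ⟨j, l, hx0, hx1⟩
    have hcol := mcColor_comp_mcCycle_bijective (m := m) j l
    exact ⟨mcCycle j l, hcol.1.of_comp, mcGraph_adj_mcCycle hx0 hx1, hcol⟩

/-- The multicolored lower bound graph contains a cycle of length `k = m + 4` using
exactly one vertex of each of the `k` colors if and only if there is a pair `(j, ℓ)`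
with `x₀ j ℓ = x₁ j ℓ = 1`. -/
theorem multicolored_cycle_iff (N m : ℕ) (hN : 1 ≤ N)
    (x0 x1 : Fin N → Fin N → Prop) :
    (∃ f : ZMod (m + 4) → MCVertex N m,
      Function.Injective f ∧
      (∀ p : ZMod (m + 4), (SimpleGraph.fromRel (mcRel m x0 x1)).Adj (f p) (f (p + 1))) ∧
      Function.Bijective (mcColor ∘ f)) ↔
    ∃ j l : Fin N, x0 j l ∧ x1 j l :=
  multicolored_cycle_iff_general N m x0 x1
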